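/- arXiv:2105.11317 — 5 statements merged into one kernel-verified Lean document; each statement's English description precedes it below -/
import Mathlib

section
/- Let G be a finite connected graph, t a positive integer, and let G₀ and G₁ be two orientations of G such that G₁ is obtained from G₀ by reversing the direction of a single arc. Then |γ_{t,1}(G₀) − γ_{t,1}(G₁)| ≤ 1, where γ_{t,1} denotes the directed (t,1) broadcast domination number. -/
open Finset

/-- `DReach A n u v`: there is a directed walk of length `n` from `u` to `v`
in the digraph with arc relation `A`. -/
def DReach {V : Type*} (A : V → V → Prop) : ℕ → V → V → Prop
  | 0, u, v => u = v
  | n + 1, u, v => ∃ w, A u w ∧ DReach A n w v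

/-- The signal a broadcasting vertex `u` of strength `t` sends to `w`:
`t - d(u,w)` where `d` is the directed distance (0 if `d(u,w) ≥ t` or `w` unreachable). -/
noncomputable def dsignal {V : Type*} (A : V → V → Prop) (t : ℕ) (u w : V) : ℕ :=
  sSup {m : ℕ | ∃ n : ℕ, DReach A n u w ∧ m = t - n}

/-- The directed reception at `w` from the broadcast set `S` of strength `t`. -/
noncomputable def dreception {V : Type*} [Fintype V] (A : V → V → Prop) (t : ℕ)
    (S : Finset V) (w : V) : ℕ :=
  ∑ v ∈ S, dsignal A t v w

/-- `S` is a directed `(t,r)` broadcast dominating set of the digraph `A`. -/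
def IsDomSet {V : Type*} [Fintype V] (A : V → V → Prop) (t r : ℕ) (S : Finset V) : Prop :=
  ∀ w : V, r ≤ dreception A t S w

/-- The directed `(t,r)` broadcast domination number of the digraph `A`. -/
noncomputable def gamma {V : Type*} [Fintype V] (A : V → V → Prop) (t r : ℕ) : ℕ :=
  sInf {k : ℕ | ∃ S : Finset V, IsDomSet A t r S ∧ S.card = k}

/-- `A` is an orientation of the simple graph `G`: every arc is along an edge of `G`,
and each edge of `G` is directed in exactly one of the two directions. -/
def IsOrientation {V : Type*} (G : SimpleGraph V) (A : V → V → Prop) : Prop :=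
  (∀ u v, A u v → G.Adj u v) ∧ ∀ u v, G.Adj u v → (A u v ↔ ¬ A v u)

/-- `A₁` is obtained from `A₀` by reversing (flipping) a single arc. -/
def OneFlip {V : Type*} (A₀ A₁ : V → V → Prop) : Prop :=
  ∃ a b, A₀ a b ∧ A₁ b a ∧
    ∀ u v, ¬((u = a ∧ v = b) ∨ (u = b ∧ v = a)) → (A₀ u v ↔ A₁ u v)

/-- The star graph on `n` vertices: vertex with value `0` is the center. -/
def starGraph (n : ℕ) : SimpleGraph (Fin n) where
  Adj u v := u ≠ v ∧ (u.val = 0 ∨ v.val = 0)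
  symm := by constructor; intro u v h; exact ⟨h.1.symm, h.2.symm⟩
  loopless := by constructor; intro u h; exact h.1 rfl

/-!
If every arc of `A₀` that is missing from `A₁` points into `b`, then any short `A₀`-walk from a
broadcaster to `w` either survives in `A₁` or, after its last arc outside `A₁`, is a shorter
`A₁`-walk from `b` to `w`. So adding `b` to a `(t,1)` dominating set of `A₀` gives one of `A₁`.
Reversing one arc `a → b` satisfies this in both directions (with `b`, resp. `a`), whence the two
domination numbers differ by at most one.
-/

section

variable {V : Type*}

lemma dsignal_pos_iff (A : V → V → Prop) (t : ℕ) (u w : V) :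
    0 < dsignal A t u w ↔ ∃ n < t, DReach A n u w := by
  have hbdd : BddAbove {m : ℕ | ∃ n : ℕ, DReach A n u w ∧ m = t - n} :=
    ⟨t, by rintro _ ⟨n, -, rfl⟩; exact Nat.sub_le t n⟩
  constructor
  · intro hpos
    have hne : {m : ℕ | ∃ n : ℕ, DReach A n u w ∧ m = t - n}.Nonempty := by
      by_contra hempty
      rw [Set.not_nonempty_iff_eq_empty] at hempty
      simp [dsignal, hempty] at hpos
    obtain ⟨n, hn, heq⟩ := Nat.sSup_mem hne hbdd
    exact ⟨n, by unfold dsignal at hpos; omega, hn⟩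
  · rintro ⟨n, hnt, hn⟩
    have : t - n ≤ dsignal A t u w := le_csSup hbdd ⟨n, hn, rfl⟩
    omega

lemma isDomSet_one_iff [Fintype V] (A : V → V → Prop) (t : ℕ) (S : Finset V) :
    IsDomSet A t 1 S ↔ ∀ w, ∃ v ∈ S, ∃ n < t, DReach A n v w := by
  simp only [IsDomSet, dreception, Nat.one_le_iff_ne_zero, ← Nat.pos_iff_ne_zero, sum_pos_iff,
    dsignal_pos_iff]

lemma DReach.reroute {A₀ A₁ : V → V → Prop} {b : V} (hsub : ∀ u v, A₀ u v → A₁ u v ∨ v = b) :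
    ∀ {n v w}, DReach A₀ n v w →
      (∃ m ≤ n, DReach A₁ m v w) ∨ ∃ m < n, DReach A₁ m b w
  | 0, _, _, h => Or.inl ⟨0, le_rfl, h⟩
  | _ + 1, v, _, ⟨x, hvx, hx⟩ => by
    rcases DReach.reroute hsub hx with ⟨m, hm, hxw⟩ | ⟨m, hm, hbw⟩
    · rcases hsub v x hvx with hvx' | rfl
      · exact Or.inl ⟨m + 1, by omega, x, hvx', hxw⟩
      · exact Or.inr ⟨m, by omega, hxw⟩
    · exact Or.inr ⟨m, by omega, hbw⟩

lemma IsDomSet.insert_of_forall_imp_or_eq [Fintype V] [DecidableEq V] {A₀ A₁ : V → V → Prop}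
    {t : ℕ} {S : Finset V} {b : V} (hsub : ∀ u v, A₀ u v → A₁ u v ∨ v = b)
    (hS : IsDomSet A₀ t 1 S) :
    IsDomSet A₁ t 1 (insert b S) := by
  rw [isDomSet_one_iff] at hS ⊢
  intro w
  obtain ⟨v, hvS, n, hnt, hvw⟩ := hS w
  rcases DReach.reroute hsub hvw with ⟨m, hm, hvw'⟩ | ⟨m, hm, hbw⟩
  · exact ⟨v, mem_insert_of_mem hvS, m, by omega, hvw'⟩
  · exact ⟨b, mem_insert_self b S, m, by omega, hbw⟩

lemma gamma_eq_zero_of_forall_not_isDomSet [Fintype V] {A : V → V → Prop} {t r : ℕ}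
    (h : ∀ S, ¬ IsDomSet A t r S) : gamma A t r = 0 :=
  Nat.sInf_eq_zero.mpr <| Or.inr <| Set.eq_empty_of_forall_notMem <| by
    rintro _ ⟨S, hS, -⟩
    exact h S hS

lemma gamma_le_gamma_add_one [Fintype V] {A₀ A₁ : V → V → Prop} {t r : ℕ}
    (h : ∀ S, IsDomSet A₀ t r S → ∃ S', IsDomSet A₁ t r S' ∧ S'.card ≤ S.card + 1)
    (hex : ∃ S, IsDomSet A₀ t r S) : gamma A₁ t r ≤ gamma A₀ t r + 1 := by
  obtain ⟨S₀, hS₀, hcard⟩ : gamma A₀ t r ∈ {k | ∃ S, IsDomSet A₀ t r S ∧ S.card = k} :=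
    Nat.sInf_mem <| let ⟨S, hS⟩ := hex; ⟨S.card, S, hS, rfl⟩
  obtain ⟨S₁, hS₁, hle⟩ := h S₀ hS₀
  calc gamma A₁ t r ≤ S₁.card := Nat.sInf_le ⟨S₁, hS₁, rfl⟩
    _ ≤ gamma A₀ t r + 1 := hcard ▸ hle

lemma abs_gamma_sub_gamma_le_one [Fintype V] {A₀ A₁ : V → V → Prop} {t r : ℕ}
    (h₀₁ : ∀ S, IsDomSet A₀ t r S → ∃ S', IsDomSet A₁ t r S' ∧ S'.card ≤ S.card + 1)
    (h₁₀ : ∀ S, IsDomSet A₁ t r S → ∃ S', IsDomSet A₀ t r S' ∧ S'.card ≤ S.card + 1) :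
    |(gamma A₀ t r : ℤ) - (gamma A₁ t r : ℤ)| ≤ 1 := by
  by_cases hex : ∃ S, IsDomSet A₀ t r S
  · have hex' : ∃ S, IsDomSet A₁ t r S :=
      let ⟨S, hS⟩ := hex; (h₀₁ S hS).imp fun _ h => h.1
    have := gamma_le_gamma_add_one h₀₁ hex
    have := gamma_le_gamma_add_one h₁₀ hex'
    rw [abs_le]
    omega
  -- neither side has a dominating set, so both numbers are the junk value `sInf ∅ = 0`
  · have hex' : ∀ S, ¬ IsDomSet A₁ t r S := fun S hS =>
      hex <| (h₁₀ S hS).imp fun _ h => h.1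
    simp only [not_exists] at hex
    simp [gamma_eq_zero_of_forall_not_isDomSet hex, gamma_eq_zero_of_forall_not_isDomSet hex']

lemma OneFlip.exists_forall_imp_or_eq {A₀ A₁ : V → V → Prop} (h : OneFlip A₀ A₁) :
    ∃ a b, (∀ u v, A₀ u v → A₁ u v ∨ v = b) ∧ (∀ u v, A₁ u v → A₀ u v ∨ v = a) := by
  obtain ⟨a, b, hab, hba, heq⟩ := h
  refine ⟨a, b, fun u v huv => ?_, fun u v huv => ?_⟩
  · by_cases hflip : (u = a ∧ v = b) ∨ (u = b ∧ v = a)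
    · rcases hflip with ⟨-, rfl⟩ | ⟨rfl, rfl⟩
      exacts [Or.inr rfl, Or.inl hba]
    · exact Or.inl ((heq u v hflip).mp huv)
  · by_cases hflip : (u = a ∧ v = b) ∨ (u = b ∧ v = a)
    · rcases hflip with ⟨rfl, rfl⟩ | ⟨-, rfl⟩
      exacts [Or.inl hab, Or.inr rfl]
    · exact Or.inl ((heq u v hflip).mpr huv)

end

theorem stmt0_general {V : Type*} [Fintype V] (t : ℕ) (A₀ A₁ : V → V → Prop) (hflip : OneFlip A₀ A₁) :
    |(gamma A₀ t 1 : ℤ) - (gamma A₁ t 1 : ℤ)| ≤ 1 := by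
  classical
  obtain ⟨a, b, hsub₀₁, hsub₁₀⟩ := hflip.exists_forall_imp_or_eq
  exact abs_gamma_sub_gamma_le_one
    (fun S hS => ⟨insert b S, hS.insert_of_forall_imp_or_eq hsub₀₁, card_insert_le b S⟩)
    (fun S hS => ⟨insert a S, hS.insert_of_forall_imp_or_eq hsub₁₀, card_insert_le a S⟩)

theorem stmt0 {V : Type*} [Fintype V] (G : SimpleGraph V) (hconn : G.Connected)
    (t : ℕ) (ht : 1 ≤ t) (A₀ A₁ : V → V → Prop)
    (h₀ : IsOrientation G A₀) (h₁ : IsOrientation G A₁) (hflip : OneFlip A₀ A₁) :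
    |(gamma A₀ t 1 : ℤ) - (gamma A₁ t 1 : ℤ)| ≤ 1 :=
  stmt0_general t A₀ A₁ hflip
end

section
/- Let G be a finite connected graph, and let G₀ and G₁ be two orientations of G differing by the reversal of a single arc. Then |γ_{2,2}(G₀) − γ_{2,2}(G₁)| ≤ 1, where γ_{2,2} denotes the directed (2,2) broadcast domination number. -/
open Finset

/-!
Reversing the arc `a → b` only removes signal arriving at `b`: every other vertex still hears
each broadcaster it heard before. Hence adding `b` to a minimum `(2,2)` dominating set of the
first orientation gives one of the second, so `γ(G₁) ≤ γ(G₀) + 1`, and symmetrically.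
-/

section Broadcast

variable {V : Type*} {A : V → V → Prop}

theorem self_mem_upperBounds_signals (t : ℕ) (u w : V) :
    t ∈ upperBounds {m : ℕ | ∃ n : ℕ, DReach A n u w ∧ m = t - n} := by
  rintro m ⟨n, -, rfl⟩
  exact Nat.sub_le t n

theorem dsignal_self (t : ℕ) (u : V) : dsignal A t u u = t :=
  (csSup_le' (self_mem_upperBounds_signals t u u)).antisymm <|
    le_csSup ⟨t, self_mem_upperBounds_signals t u u⟩ ⟨0, rfl, rfl⟩

open Classical in
theorem dsignal_two_of_ne {u w : V} (huw : u ≠ w) :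
    dsignal A 2 u w = if A u w then 1 else 0 := by
  have hbound : ∀ m ∈ {m : ℕ | ∃ n : ℕ, DReach A n u w ∧ m = 2 - n},
      m ≤ if A u w then 1 else 0 := by
    rintro m ⟨n, hn, rfl⟩
    match n, hn with
    | 0, hn => exact absurd hn huw
    | 1, ⟨_, hA, rfl⟩ => simp [hA]
    | n + 2, _ => simp
  refine (csSup_le' hbound).antisymm ?_
  split_ifs with hA
  · exact le_csSup ⟨2, self_mem_upperBounds_signals 2 u w⟩ ⟨1, ⟨w, hA, rfl⟩, rfl⟩
  · exact Nat.zero_le _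

theorem le_dreception_of_mem [Fintype V] {t : ℕ} {S : Finset V} {w : V} (hw : w ∈ S) :
    t ≤ dreception A t S w := by
  unfold dreception
  simpa only [dsignal_self] using
    single_le_sum (f := fun v => dsignal A t v w) (fun _ _ => Nat.zero_le _) hw

theorem isDomSet_univ [Fintype V] {t r : ℕ} (hr : r ≤ t) : IsDomSet A t r univ :=
  fun _ => hr.trans (le_dreception_of_mem (mem_univ _))

theorem gamma_le_card [Fintype V] {t r : ℕ} {S : Finset V} (hS : IsDomSet A t r S) :
    gamma A t r ≤ S.card :=
  Nat.sInf_le ⟨S, hS, rfl⟩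

theorem exists_isDomSet_card_eq_gamma [Fintype V] {t r : ℕ} (hr : r ≤ t) :
    ∃ S : Finset V, IsDomSet A t r S ∧ S.card = gamma A t r :=
  Nat.sInf_mem (s := {k | ∃ S : Finset V, IsDomSet A t r S ∧ S.card = k})
    ⟨_, univ, isDomSet_univ hr, rfl⟩

end Broadcast

section ArcChange

variable {V : Type*} [Fintype V] {A₀ A₁ : V → V → Prop}

theorem dreception_two_mono {S : Finset V} {w : V} (hw : w ∉ S)
    (h : ∀ v ∈ S, A₀ v w → A₁ v w) : dreception A₀ 2 S w ≤ dreception A₁ 2 S w := by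
  refine sum_le_sum fun v hv => ?_
  have hvw : v ≠ w := fun hvw => hw (hvw ▸ hv)
  rw [dsignal_two_of_ne hvw, dsignal_two_of_ne hvw]
  by_cases hA : A₀ v w <;> simp [hA, h v hv]

theorem IsDomSet.insert_of_forall_imp [DecidableEq V] {r : ℕ} (hr : r ≤ 2) {S : Finset V}
    (hS : IsDomSet A₀ 2 r S) {b : V} (h : ∀ v w, w ≠ b → A₀ v w → A₁ v w) :
    IsDomSet A₁ 2 r (insert b S) := by
  intro w
  by_cases hw : w ∈ insert b S
  · exact hr.trans (le_dreception_of_mem hw)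
  obtain ⟨hwb, hwS⟩ : w ≠ b ∧ w ∉ S := by simpa using hw
  calc r ≤ dreception A₀ 2 S w := hS w
    _ ≤ dreception A₁ 2 S w := dreception_two_mono hwS fun v _ => h v w hwb
    _ ≤ dreception A₁ 2 (insert b S) w :=
      sum_le_sum_of_subset (f := fun v => dsignal A₁ 2 v w) (subset_insert b S)

theorem gamma_two_le_add_one_of_forall_imp {r : ℕ} (hr : r ≤ 2) {b : V}
    (h : ∀ v w, w ≠ b → A₀ v w → A₁ v w) : gamma A₁ 2 r ≤ gamma A₀ 2 r + 1 := by
  classical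
  obtain ⟨S, hS, hcard⟩ := exists_isDomSet_card_eq_gamma (A := A₀) hr
  calc gamma A₁ 2 r ≤ (insert b S).card := gamma_le_card (hS.insert_of_forall_imp hr h)
    _ ≤ S.card + 1 := card_insert_le b S
    _ = gamma A₀ 2 r + 1 := by rw [hcard]

end ArcChange

theorem IsOrientation.asymm {V : Type*} {G : SimpleGraph V} {A : V → V → Prop}
    (hA : IsOrientation G A) {u v : V} (huv : A u v) : ¬A v u :=
  (hA.2 u v (hA.1 u v huv)).1 huv

namespace OneFlip

variable {V : Type*} {A₀ A₁ : V → V → Prop}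

theorem symm (hflip : OneFlip A₀ A₁) : OneFlip A₁ A₀ := by
  obtain ⟨a, b, hab, hba, hother⟩ := hflip
  exact ⟨b, a, hba, hab, fun u v huv => (hother u v (by tauto)).symm⟩

theorem exists_forall_imp_of_ne {G : SimpleGraph V} (h₀ : IsOrientation G A₀)
    (hflip : OneFlip A₀ A₁) : ∃ b, ∀ v w, w ≠ b → A₀ v w → A₁ v w := by
  obtain ⟨a, b, hab, -, hother⟩ := hflip
  refine ⟨b, fun v w hwb hvw => (hother v w ?_).1 hvw⟩
  rintro (⟨-, rfl⟩ | ⟨rfl, rfl⟩)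
  exacts [hwb rfl, h₀.asymm hab hvw]

theorem gamma_two_le_add_one [Fintype V] {G : SimpleGraph V} (h₀ : IsOrientation G A₀)
    (hflip : OneFlip A₀ A₁) {r : ℕ} (hr : r ≤ 2) : gamma A₁ 2 r ≤ gamma A₀ 2 r + 1 :=
  let ⟨_, h⟩ := hflip.exists_forall_imp_of_ne h₀
  gamma_two_le_add_one_of_forall_imp hr h

end OneFlip

theorem stmt2_general {V : Type*} [Fintype V] (G : SimpleGraph V)
    (A₀ A₁ : V → V → Prop)
    (h₀ : IsOrientation G A₀) (h₁ : IsOrientation G A₁) (hflip : OneFlip A₀ A₁) :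
    |(gamma A₀ 2 2 : ℤ) - (gamma A₁ 2 2 : ℤ)| ≤ 1 := by
  have h₀₁ := hflip.gamma_two_le_add_one h₀ le_rfl
  have h₁₀ := hflip.symm.gamma_two_le_add_one h₁ le_rfl
  rw [abs_le]
  omega

theorem stmt2 {V : Type*} [Fintype V] (G : SimpleGraph V) (hconn : G.Connected)
    (A₀ A₁ : V → V → Prop)
    (h₀ : IsOrientation G A₀) (h₁ : IsOrientation G A₁) (hflip : OneFlip A₀ A₁) :
    |(gamma A₀ 2 2 : ℤ) - (gamma A₁ 2 2 : ℤ)| ≤ 1 :=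
  stmt2_general G A₀ A₁ h₀ h₁ hflip
end

section
/- Let S_n be the star graph on n ≥ 3 vertices and let t, r be positive integers with t > r. Then the set of values γ_{t,r}(Ḡ) over all orientations Ḡ of S_n is exactly {1, 2, ..., n−1}. -/
open Finset

/-!
In an orientation of the star, a source leaf has no in-arcs, so it receives nothing from other
vertices and lies in every dominating set; and two leaves are never adjacent, so a leaf hears
another leaf only through the center, with signal `t - 2`. Orienting leaves `1, …, s` towards the
center therefore gives domination number `s` when `s (t - 2) ≥ r` (the sources alone suffice)
and `s + 1` otherwise (the sources together with the center). Every value `k ∈ [1, n - 1]` is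
obtained from `s = k` or `s = k - 1`. Conversely, the center alone dominates when all leaves are
sinks, and otherwise all leaves dominate, the center hearing a source leaf.
-/

section Broadcast

variable {V : Type*} {A : V → V → Prop} {t m d : ℕ} {u v w : V}

lemma bddAbove_signals (A : V → V → Prop) (t : ℕ) (u w : V) :
    BddAbove {m : ℕ | ∃ n : ℕ, DReach A n u w ∧ m = t - n} :=
  ⟨t, by rintro x ⟨n, -, rfl⟩; omega⟩

lemma le_dsignal_of_dReach (h : DReach A m u w) : t - m ≤ dsignal A t u w :=
  le_csSup (bddAbove_signals A t u w) ⟨m, h, rfl⟩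

lemma dsignal_le_of_forall_dReach (h : ∀ m, DReach A m u w → d ≤ m) :
    dsignal A t u w ≤ t - d :=
  csSup_le' (by rintro x ⟨m, hm, rfl⟩; have := h m hm; omega)

lemma dsignal_le_sub_two (hne : u ≠ w) (hA : ¬ A u w) : dsignal A t u w ≤ t - 2 := by
  refine dsignal_le_of_forall_dReach fun m hm => ?_
  match m, hm with
  | 0, hm => exact absurd hm hne
  | 1, ⟨x, hx, hxw⟩ => exact absurd ((show x = w from hxw) ▸ hx) hA
  | _ + 2, _ => omega

lemma DReach.eq_of_forall_not_arc (hw : ∀ v, ¬ A v w) : ∀ {m u}, DReach A m u w → u = w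
  | 0, _, h => h
  | _ + 1, _, ⟨_, hx, h⟩ => absurd hx (DReach.eq_of_forall_not_arc hw h ▸ hw _)

variable [Fintype V] {S : Finset V} {r : ℕ}

lemma dsignal_le_dreception (hv : v ∈ S) : dsignal A t v w ≤ dreception A t S w :=
  single_le_sum (f := fun v => dsignal A t v w) (fun _ _ => Nat.zero_le _) hv

lemma le_dreception_of_mem_or_arc (hrt : r < t) (h : w ∈ S ∨ ∃ u ∈ S, A u w) :
    r ≤ dreception A t S w := by
  rcases h with hw | ⟨u, hu, huw⟩
  · calc r ≤ t - 0 := by omega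
      _ ≤ dsignal A t w w := le_dsignal_of_dReach rfl
      _ ≤ _ := dsignal_le_dreception hw
  · calc r ≤ t - 1 := by omega
      _ ≤ dsignal A t u w := le_dsignal_of_dReach ⟨w, huw, rfl⟩
      _ ≤ _ := dsignal_le_dreception hu

lemma isDomSet_of_forall_mem_or_arc (hrt : r < t) (h : ∀ w, w ∈ S ∨ ∃ u ∈ S, A u w) :
    IsDomSet A t r S :=
  fun w => le_dreception_of_mem_or_arc hrt (h w)

lemma IsDomSet.mem_of_forall_not_arc (hS : IsDomSet A t r S) (hr : 0 < r)
    (hw : ∀ v, ¬ A v w) : w ∈ S := by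
  by_contra hwS
  have : dreception A t S w = 0 := by
    refine sum_eq_zero fun v hv => ?_
    have : dsignal A t v w ≤ t - t := dsignal_le_of_forall_dReach fun m hm =>
      absurd (DReach.eq_of_forall_not_arc hw hm ▸ hv) hwS
    omega
  have := hS w
  omega

lemma IsDomSet.nonempty [Nonempty V] (hS : IsDomSet A t r S) (hr : 0 < r) : S.Nonempty := by
  by_contra hS0
  have := hS (Classical.arbitrary V)
  simp only [not_nonempty_iff_eq_empty.mp hS0, dreception, sum_empty] at this
  omega

lemma gamma_le (hS : IsDomSet A t r S) : gamma A t r ≤ #S :=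
  Nat.sInf_le ⟨S, hS, rfl⟩

lemma le_gamma {k : ℕ} (hS : IsDomSet A t r S) (h : ∀ T, IsDomSet A t r T → k ≤ #T) :
    k ≤ gamma A t r := by
  obtain ⟨T, hT, hcard⟩ := Nat.sInf_mem (⟨#S, S, hS, rfl⟩ :
    {k : ℕ | ∃ S : Finset V, IsDomSet A t r S ∧ #S = k}.Nonempty)
  exact (h T hT).trans_eq hcard

end Broadcast

section Star

variable {n t r : ℕ}

lemma exists_isDomSet_card_le_of_isOrientation {A : Fin n → Fin n → Prop} (hn : 2 ≤ n)
    (hA : IsOrientation (starGraph n) A) (hrt : r < t) :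
    ∃ S : Finset (Fin n), IsDomSet A t r S ∧ #S ≤ n - 1 := by
  set c : Fin n := ⟨0, by omega⟩
  by_cases hsrc : ∃ l, l ≠ c ∧ A l c
  · obtain ⟨l, hlc, hl⟩ := hsrc
    refine ⟨univ.erase c, isDomSet_of_forall_mem_or_arc hrt fun w => ?_, by simp⟩
    by_cases hwc : w = c
    · exact .inr ⟨l, mem_erase.mpr ⟨hlc, mem_univ l⟩, hwc ▸ hl⟩
    · exact .inl (mem_erase.mpr ⟨hwc, mem_univ w⟩)
  · push Not at hsrc
    refine ⟨{c}, isDomSet_of_forall_mem_or_arc hrt fun w => ?_, by rw [card_singleton]; omega⟩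
    by_cases hwc : w = c
    · exact .inl (mem_singleton.mpr hwc)
    · have hadj : (starGraph n).Adj c w := ⟨Ne.symm hwc, .inl rfl⟩
      exact .inr ⟨c, mem_singleton_self c, (hA.2 c w hadj).mpr (hsrc w hwc)⟩

lemma gamma_mem_Icc_of_isOrientation {A : Fin n → Fin n → Prop} (hn : 2 ≤ n)
    (hA : IsOrientation (starGraph n) A) (hr : 1 ≤ r) (hrt : r < t) :
    gamma A t r ∈ Set.Icc 1 (n - 1) := by
  have : Nonempty (Fin n) := ⟨⟨0, by omega⟩⟩
  obtain ⟨S, hS, hcard⟩ := exists_isDomSet_card_le_of_isOrientation hn hA hrt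
  exact ⟨le_gamma hS fun T hT => card_pos.mpr (hT.nonempty hr), (gamma_le hS).trans hcard⟩

/-- The orientation of the star in which the leaves `1, …, s` are sources and the others sinks. -/
def starOrientation (n s : ℕ) : Fin n → Fin n → Prop :=
  fun u v => (v.val = 0 ∧ u.val ≠ 0 ∧ u.val ≤ s) ∨ (u.val = 0 ∧ v.val ≠ 0 ∧ s < v.val)

def sourceLeaves (n s : ℕ) : Finset (Fin n) :=
  univ.filter fun v => v.val ≠ 0 ∧ v.val ≤ s

variable {s : ℕ}

lemma isOrientation_starOrientation : IsOrientation (starGraph n) (starOrientation n s) := by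
  refine ⟨fun u v huv => ⟨fun h => ?_, ?_⟩, fun u v ⟨hne, _⟩ => ?_⟩
  · subst h; unfold starOrientation at huv; omega
  · unfold starOrientation at huv; omega
  · have : u.val ≠ v.val := Fin.val_ne_of_ne hne
    unfold starOrientation
    omega

lemma mem_sourceLeaves {v : Fin n} : v ∈ sourceLeaves n s ↔ v.val ≠ 0 ∧ v.val ≤ s := by
  simp [sourceLeaves]

lemma card_sourceLeaves (hs : s < n) : #(sourceLeaves n s) = s := by
  have : (sourceLeaves n s).map Fin.valEmbedding = Icc 1 s := by
    ext k
    simp only [mem_map, mem_sourceLeaves, Fin.valEmbedding_apply, mem_Icc]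
    exact ⟨by rintro ⟨v, hv, rfl⟩; omega, fun hk => ⟨⟨k, by omega⟩, by dsimp only; omega, rfl⟩⟩
  rw [← card_map, this, Nat.card_Icc, Nat.add_sub_cancel]

lemma sourceLeaves_subset (hr : 0 < r) {S : Finset (Fin n)}
    (hS : IsDomSet (starOrientation n s) t r S) : sourceLeaves n s ⊆ S := fun l hl =>
  hS.mem_of_forall_not_arc hr fun v hv => by
    rw [mem_sourceLeaves] at hl
    unfold starOrientation at hv
    omega

lemma gamma_starOrientation_of_le_mul (hs : s < n) (hs1 : 1 ≤ s) (hr : 0 < r) (hrt : r < t)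
    (hcov : r ≤ s * (t - 2)) : gamma (starOrientation n s) t r = s := by
  have hS : IsDomSet (starOrientation n s) t r (sourceLeaves n s) := by
    intro w
    by_cases hw : s < w.val
    · have hsignal : ∀ l ∈ sourceLeaves n s, t - 2 ≤ dsignal (starOrientation n s) t l w :=
        fun l hl => le_dsignal_of_dReach
          ⟨⟨0, by omega⟩, .inl ⟨rfl, mem_sourceLeaves.mp hl⟩, w, .inr ⟨rfl, by omega, hw⟩, rfl⟩
      calc r ≤ #(sourceLeaves n s) • (t - 2) := by rwa [card_sourceLeaves hs]
        _ ≤ _ := card_nsmul_le_sum _ _ _ hsignal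
    · refine le_dreception_of_mem_or_arc hrt ?_
      by_cases hw0 : w.val = 0
      · exact .inr ⟨⟨1, by omega⟩, mem_sourceLeaves.mpr ⟨one_ne_zero, hs1⟩,
          .inl ⟨hw0, one_ne_zero, hs1⟩⟩
      · exact .inl (mem_sourceLeaves.mpr ⟨hw0, by omega⟩)
  refine le_antisymm ((gamma_le hS).trans_eq (card_sourceLeaves hs)) ?_
  exact le_gamma hS fun T hT => card_sourceLeaves hs ▸ card_le_card (sourceLeaves_subset hr hT)

lemma gamma_starOrientation_of_mul_lt (hs : s + 1 < n) (hr : 0 < r) (hrt : r < t)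
    (hcov : s * (t - 2) < r) : gamma (starOrientation n s) t r = s + 1 := by
  set c : Fin n := ⟨0, by omega⟩
  have hcard : #(insert c (sourceLeaves n s)) = s + 1 := by
    rw [card_insert_of_notMem (by simp [c, mem_sourceLeaves]), card_sourceLeaves (by omega)]
  have hS : IsDomSet (starOrientation n s) t r (insert c (sourceLeaves n s)) := by
    refine isDomSet_of_forall_mem_or_arc hrt fun w => ?_
    by_cases hw : s < w.val
    · exact .inr ⟨c, mem_insert_self _ _, .inr ⟨rfl, by omega, hw⟩⟩
    · by_cases hw0 : w.val = 0
      · exact .inl (mem_insert.mpr (.inl (Fin.ext hw0)))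
      · exact .inl (mem_insert_of_mem (mem_sourceLeaves.mpr ⟨hw0, by omega⟩))
  refine le_antisymm ((gamma_le hS).trans_eq hcard) (le_gamma hS fun T hT => ?_)
  by_contra! hT_card
  have hT_eq : sourceLeaves n s = T := eq_of_subset_of_card_le (sourceLeaves_subset hr hT)
    (by rw [card_sourceLeaves (by omega)]; omega)
  set w : Fin n := ⟨n - 1, by omega⟩
  -- a sink leaf hears the source leaves only through the center
  have hsignal : ∀ l ∈ sourceLeaves n s, dsignal (starOrientation n s) t l w ≤ t - 2 := by
    intro l hl
    rw [mem_sourceLeaves] at hl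
    refine dsignal_le_sub_two (Fin.ne_of_val_ne (by simp only [w]; omega)) fun hlw => ?_
    unfold starOrientation at hlw
    simp only [w] at hlw
    omega
  have := calc r ≤ dreception (starOrientation n s) t T w := hT w
    _ ≤ #(sourceLeaves n s) • (t - 2) := hT_eq ▸ sum_le_card_nsmul _ _ _ hsignal
    _ = s * (t - 2) := by rw [card_sourceLeaves (by omega), smul_eq_mul]
  omega

end Star

theorem stmt8 (n : ℕ) (hn : 3 ≤ n) (t r : ℕ) (hr : 1 ≤ r) (htr : r < t) :
    {k : ℕ | ∃ A : Fin n → Fin n → Prop, IsOrientation (starGraph n) A ∧ gamma A t r = k}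
      = Set.Icc 1 (n - 1) := by
  ext k
  constructor
  · rintro ⟨A, hA, rfl⟩
    exact gamma_mem_Icc_of_isOrientation (by omega) hA hr htr
  · rintro ⟨hk1, hkn⟩
    by_cases hcov : r ≤ k * (t - 2)
    · exact ⟨starOrientation n k, isOrientation_starOrientation,
        gamma_starOrientation_of_le_mul (by omega) hk1 hr htr hcov⟩
    · refine ⟨starOrientation n (k - 1), isOrientation_starOrientation, ?_⟩
      have hcov' : (k - 1) * (t - 2) < r :=
        (Nat.mul_le_mul_right _ (Nat.sub_le k 1)).trans_lt (not_le.mp hcov)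
      rw [gamma_starOrientation_of_mul_lt (by omega) hr htr hcov']
      omega
end

section
/- Consider the infinite grid graph ℤ×ℤ. There exists an orientation of ℤ×ℤ together with a set S of broadcasting vertices of density 1/2 (i.e., S occupies every other column entirely) that forms an efficient directed (2,2) broadcast dominating set: every vertex not in S has exactly two broadcasting in-neighbors, hence reception exactly 2. -/
/-! Orient every horizontal edge out of its even-column endpoint and every vertical edge upwards.
A vertex in an odd column then hears exactly its two horizontal neighbours, and the even columns
meet the box `[-n, n]²` in `(2⌊n/2⌋ + 1)(2n + 1)` points. -/

/-- Adjacency in the infinite grid graph `ℤ × ℤ`. -/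
def gridAdj (p q : ℤ × ℤ) : Prop := |p.1 - q.1| + |p.2 - q.2| = 1

/-- `A` is an orientation of the infinite grid graph. -/
def IsOrientationZ (A : ℤ × ℤ → ℤ × ℤ → Prop) : Prop :=
  (∀ u v, A u v → gridAdj u v) ∧ ∀ u v, gridAdj u v → (A u v ↔ ¬ A v u)

/-- The directed `(2,2)` reception at `w` from broadcast set `S`: a broadcast vertex of
strength 2 gives itself signal 2 and each of its out-neighbors signal 1. -/
noncomputable def rec22 (A : ℤ × ℤ → ℤ × ℤ → Prop) (S : Set (ℤ × ℤ)) (w : ℤ × ℤ) : ℕ :=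
  S.indicator (fun _ => 2) w + Set.ncard {v : ℤ × ℤ | v ∈ S ∧ A v w}

/-- `S` is a directed `(2,2)` broadcast dominating set of the oriented grid `A`. -/
def IsDom22 (A : ℤ × ℤ → ℤ × ℤ → Prop) (S : Set (ℤ × ℤ)) : Prop :=
  ∀ w, 2 ≤ rec22 A S w

/-- `S` is efficient (for `t = r = 2`): every vertex outside `S` has reception exactly 2. -/
def IsEff22 (A : ℤ × ℤ → ℤ × ℤ → Prop) (S : Set (ℤ × ℤ)) : Prop :=
  ∀ w ∉ S, rec22 A S w = 2

/-- `S ⊆ ℤ × ℤ` has density `d`. -/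
def HasDensity (S : Set (ℤ × ℤ)) (d : ℝ) : Prop :=
  Filter.Tendsto
    (fun n : ℕ =>
      (Set.ncard (S ∩ Set.Icc (-(n : ℤ)) (n : ℤ) ×ˢ Set.Icc (-(n : ℤ)) (n : ℤ)) : ℝ) /
        ((2 * (n : ℝ) + 1) ^ 2))
    Filter.atTop (nhds d)

open Filter Topology

def evenColumns : Set (ℤ × ℤ) := {x : ℤ | Even x} ×ˢ Set.univ

def evenToOddOrientation (u v : ℤ × ℤ) : Prop :=
  gridAdj u v ∧ ((u.2 = v.2 ∧ Even u.1) ∨ (u.1 = v.1 ∧ v.2 = u.2 + 1))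

lemma isOrientationZ_evenToOddOrientation : IsOrientationZ evenToOddOrientation := by
  refine ⟨fun u v h => h.1, fun u v h => ?_⟩
  simp only [evenToOddOrientation, gridAdj, Int.abs_eq_natAbs, Int.even_iff] at *
  omega

lemma inNeighbors_evenToOddOrientation {w : ℤ × ℤ} (hw : w ∉ evenColumns) :
    {v | v ∈ evenColumns ∧ evenToOddOrientation v w} = {(w.1 - 1, w.2), (w.1 + 1, w.2)} := by
  ext ⟨a, b⟩
  simp only [evenColumns, evenToOddOrientation, gridAdj, Set.mem_prod, Set.mem_univ, and_true,
    Set.mem_ofPred_eq, Set.mem_insert_iff, Set.mem_singleton_iff, Prod.mk.injEq,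
    Int.abs_eq_natAbs, Int.even_iff] at *
  omega

lemma ncard_inNeighbors_evenToOddOrientation {w : ℤ × ℤ} (hw : w ∉ evenColumns) :
    {v | v ∈ evenColumns ∧ evenToOddOrientation v w}.ncard = 2 := by
  rw [inNeighbors_evenToOddOrientation hw, Set.ncard_pair (by simp; omega)]

section Reception

variable {A : ℤ × ℤ → ℤ × ℤ → Prop} {S : Set (ℤ × ℤ)}

lemma isEff22_of_ncard_inNeighbors (h : ∀ w ∉ S, {v | v ∈ S ∧ A v w}.ncard = 2) :
    IsEff22 A S := fun w hw => by
  rw [rec22, Set.indicator_of_notMem hw, h w hw, zero_add]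

lemma IsEff22.isDom22 (h : IsEff22 A S) : IsDom22 A S := fun w => by
  by_cases hw : w ∈ S
  · simp [rec22, Set.indicator_of_mem hw]
  · exact (h w hw).ge

end Reception

lemma Int.ncard_Icc (a b : ℤ) : (Set.Icc a b).ncard = (b + 1 - a).toNat := by
  rw [← Finset.coe_Icc, Set.ncard_coe_finset, Int.card_Icc]

lemma hasDensity_prod_univ {C : Set ℤ} {d : ℝ}
    (h : Tendsto (fun n : ℕ => ((C ∩ Set.Icc (-(n : ℤ)) n).ncard : ℝ) / (2 * n + 1))
      atTop (𝓝 d)) :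
    HasDensity (C ×ˢ Set.univ) d := by
  have hbox (n : ℕ) : C ×ˢ Set.univ ∩ Set.Icc (-(n : ℤ)) n ×ˢ Set.Icc (-(n : ℤ)) n
      = (C ∩ Set.Icc (-(n : ℤ)) n) ×ˢ Set.Icc (-(n : ℤ)) n := by
    rw [Set.prod_inter_prod, Set.univ_inter]
  have hrow (n : ℕ) : ((Set.Icc (-(n : ℤ)) n).ncard : ℝ) = 2 * n + 1 := by
    rw [Int.ncard_Icc, show (n : ℤ) + 1 - -n = ((2 * n + 1 : ℕ) : ℤ) by push_cast; ring,
      Int.toNat_natCast]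
    push_cast
    ring
  refine h.congr fun n => ?_
  rw [hbox, Set.ncard_prod, Nat.cast_mul, hrow, sq, mul_div_mul_right _ _ (by positivity)]

lemma ncard_even_inter_Icc (n : ℕ) :
    ({x : ℤ | Even x} ∩ Set.Icc (-(n : ℤ)) n).ncard = 2 * (n / 2) + 1 := by
  have h : {x : ℤ | Even x} ∩ Set.Icc (-(n : ℤ)) n
      = (2 * ·) '' Set.Icc (-((n / 2 : ℕ) : ℤ)) (n / 2 : ℕ) := by
    ext x
    simp only [Set.mem_inter_iff, Set.mem_ofPred_eq, Set.mem_Icc, Set.mem_image, Int.even_iff]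
    constructor
    · rintro ⟨hx, hlo, hhi⟩
      exact ⟨x / 2, by omega, by omega⟩
    · rintro ⟨k, ⟨hlo, hhi⟩, rfl⟩
      omega
  rw [h, Set.ncard_image_of_injective _ fun a b hab => by omega, Int.ncard_Icc]
  omega

lemma tendsto_ncard_even_inter_Icc_div :
    Tendsto (fun n : ℕ => (({x : ℤ | Even x} ∩ Set.Icc (-(n : ℤ)) n).ncard : ℝ) / (2 * n + 1))
      atTop (𝓝 (1 / 2)) := by
  have hinv : Tendsto (fun n : ℕ => (1 / 2 : ℝ) * (2 * (n : ℝ) + 1)⁻¹) atTop (𝓝 0) := by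
    simpa using (tendsto_inv_atTop_zero.comp <| tendsto_atTop_add_const_right _ 1 <|
      tendsto_natCast_atTop_atTop.const_mul_atTop two_pos).const_mul (1 / 2 : ℝ)
  -- `2 ⌊n/2⌋ + 1` is `n` or `n + 1`, so the ratio is within `1 / (2 (2n+1))` of `1/2`.
  refine tendsto_of_tendsto_of_tendsto_of_le_of_le (by simpa using hinv.const_sub (1 / 2 : ℝ))
    (by simpa using hinv.const_add (1 / 2 : ℝ)) (fun n => ?_) (fun n => ?_) <;>
  · have hpos : (0 : ℝ) < 2 * n + 1 := by positivity
    have hlo : (n : ℝ) ≤ (2 * (n / 2) + 1 : ℕ) := by exact_mod_cast (by omega)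
    have hhi : ((2 * (n / 2) + 1 : ℕ) : ℝ) ≤ n + 1 := by exact_mod_cast (by omega)
    simp only [ncard_even_inter_Icc]
    rw [← sub_nonneg]
    field_simp
    linarith

theorem stmt16 :
    ∃ (A : ℤ × ℤ → ℤ × ℤ → Prop) (S : Set (ℤ × ℤ)),
      IsOrientationZ A ∧ HasDensity S (1 / 2) ∧ IsDom22 A S ∧ IsEff22 A S ∧
      ∀ w ∉ S, Set.ncard {v : ℤ × ℤ | v ∈ S ∧ A v w} = 2 := by
  have hin : ∀ w ∉ evenColumns, {v | v ∈ evenColumns ∧ evenToOddOrientation v w}.ncard = 2 :=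
    fun _ => ncard_inNeighbors_evenToOddOrientation
  have heff := isEff22_of_ncard_inNeighbors hin
  exact ⟨evenToOddOrientation, evenColumns, isOrientationZ_evenToOddOrientation,
    hasDensity_prod_univ tendsto_ncard_even_inter_Icc_div, heff.isDom22, heff, hin⟩
end

section
/- There exists an orientation of the infinite grid ℤ×ℤ and a set S of broadcasting vertices of density 2/3 that forms an efficient directed (2,2) broadcast dominating set. -/
/-!
Orient every vertical edge upwards and every horizontal edge towards the nearest column
`≡ 2 (mod 3)`. The columns `x ≢ 2 (mod 3)` are the towers; a vertex in a column `x ≡ 2`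
then has exactly its two horizontal neighbours as broadcasting in-neighbours, so it receives
exactly 2, while the towers receive 2 from themselves. Two columns out of three give
density 2/3.
-/

open Filter Topology Finset

lemma gridAdj_iff (u v : ℤ × ℤ) : gridAdj u v ↔
    (u.2 = v.2 ∧ (v.1 = u.1 + 1 ∨ u.1 = v.1 + 1)) ∨
      (u.1 = v.1 ∧ (v.2 = u.2 + 1 ∨ u.2 = v.2 + 1)) := by
  unfold gridAdj
  rcases abs_cases (u.1 - v.1) with ⟨e1, _⟩ | ⟨e1, _⟩ <;>
    rcases abs_cases (u.2 - v.2) with ⟨e2, _⟩ | ⟨e2, _⟩ <;> rw [e1, e2] <;> omega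

lemma gridAdj_comm (u v : ℤ × ℤ) : gridAdj u v ↔ gridAdj v u := by
  simp only [gridAdj_iff]
  omega

def towerColumns : Set (ℤ × ℤ) := {p | p.1 % 3 ≠ 2}

def towerOrientation (u v : ℤ × ℤ) : Prop :=
  gridAdj u v ∧ (v.2 = u.2 + 1 ∨ (u.2 = v.2 ∧
    ((v.1 = u.1 + 1 ∧ u.1 % 3 ≠ 2) ∨ (u.1 = v.1 + 1 ∧ v.1 % 3 = 2))))

lemma isOrientationZ_towerOrientation : IsOrientationZ towerOrientation := by
  refine ⟨fun u v h => h.1, fun u v h => ?_⟩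
  have h' := (gridAdj_comm u v).1 h
  simp only [towerOrientation, gridAdj_iff] at *
  omega

lemma broadcastInNeighbors_of_notMem {w : ℤ × ℤ} (hw : w ∉ towerColumns) :
    {v | v ∈ towerColumns ∧ towerOrientation v w} = {(w.1 - 1, w.2), (w.1 + 1, w.2)} := by
  simp only [towerColumns, Set.mem_ofPred_eq, not_not] at hw
  ext v
  simp only [towerColumns, Set.mem_ofPred_eq, towerOrientation, gridAdj_iff,
    Set.mem_insert_iff, Set.mem_singleton_iff, Prod.ext_iff]
  omega

lemma rec22_towerColumns_of_notMem {w : ℤ × ℤ} (hw : w ∉ towerColumns) :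
    rec22 towerOrientation towerColumns w = 2 := by
  rw [rec22, Set.indicator_of_notMem hw, broadcastInNeighbors_of_notMem hw,
    Set.ncard_pair (by simp; omega)]

lemma two_le_rec22_of_mem {A : ℤ × ℤ → ℤ × ℤ → Prop} {S : Set (ℤ × ℤ)} {w : ℤ × ℤ}
    (hw : w ∈ S) : 2 ≤ rec22 A S w := by
  rw [rec22, Set.indicator_of_mem hw]
  exact Nat.le_add_right 2 _

lemma tendsto_div_of_abs_sub_mul_le {a b : ℕ → ℝ} {d C : ℝ} (hb : Tendsto b atTop atTop)
    (h : ∀ n, |a n - d * b n| ≤ C) : Tendsto (fun n => a n / b n) atTop (𝓝 d) := by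
  rw [tendsto_iff_dist_tendsto_zero]
  refine squeeze_zero' (Eventually.of_forall fun n => dist_nonneg) ?_
    (hb.const_div_atTop C)
  filter_upwards [hb.eventually_gt_atTop 0] with n hn
  rw [Real.dist_eq, div_sub' hn.ne', abs_div, abs_of_pos hn, mul_comm]
  exact div_le_div_of_nonneg_right (h n) hn.le

lemma hasDensity_columns (P : ℤ → Prop) [DecidablePred P] {d : ℝ}
    (h : Tendsto (fun n : ℕ => (#{x ∈ Icc (-(n : ℤ)) n | P x} : ℝ) / (2 * n + 1))
      atTop (𝓝 d)) :
    HasDensity {p | P p.1} d := by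
  have hbox (n : ℕ) : {p : ℤ × ℤ | P p.1} ∩ Set.Icc (-(n : ℤ)) n ×ˢ Set.Icc (-(n : ℤ)) n
      = ↑({x ∈ Icc (-(n : ℤ)) n | P x} ×ˢ Icc (-(n : ℤ)) n) := by
    ext ⟨x, y⟩
    simp only [Set.mem_inter_iff, Set.mem_ofPred_eq, Set.mem_prod, Set.mem_Icc, coe_product,
      coe_filter, mem_Icc, mem_coe]
    tauto
  have hcard (n : ℕ) : (#(Icc (-(n : ℤ)) n) : ℝ) = 2 * n + 1 := by
    rw [Int.card_Icc, show (n : ℤ) + 1 - -n = ((2 * n + 1 : ℕ) : ℤ) by push_cast; ring,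
      Int.toNat_natCast]
    push_cast
    ring
  refine h.congr fun n => ?_
  have hpos : (2 * (n : ℝ) + 1) ≠ 0 := by positivity
  rw [hbox, Set.ncard_coe_finset, card_product, Nat.cast_mul, hcard, sq,
    mul_div_mul_right _ _ hpos]

lemma card_filter_mod_three_ne_two_bounds (n : ℕ) :
    4 * (n : ℤ) ≤ 3 * #{x ∈ Icc (-(n : ℤ)) n | x % 3 ≠ 2} ∧
      3 * (#{x ∈ Icc (-(n : ℤ)) n | x % 3 ≠ 2} : ℤ) ≤ 4 * n + 4 := by
  -- `k ↦ 3 ⌊k/2⌋ + k % 2` enumerates the residues 0, 1 mod 3 in increasing order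
  have himg : {x ∈ Icc (-(n : ℤ)) n | x % 3 ≠ 2}
      = (Icc (-(2 * (n : ℤ) / 3)) ((2 * n + 1) / 3)).image (fun k => 3 * (k / 2) + k % 2) := by
    ext x
    simp only [mem_filter, mem_Icc, mem_image]
    constructor
    · rintro ⟨⟨h1, h2⟩, h3⟩
      exact ⟨2 * (x / 3) + x % 3, by omega, by omega⟩
    · rintro ⟨k, hk, rfl⟩
      omega
  rw [himg, card_image_of_injective _ (fun j k h => by omega), Int.card_Icc]
  omega

lemma hasDensity_towerColumns : HasDensity towerColumns (2 / 3) := by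
  refine hasDensity_columns (fun x => x % 3 ≠ 2) (tendsto_div_of_abs_sub_mul_le (C := 1)
    (tendsto_atTop_add_const_right _ 1
      (tendsto_natCast_atTop_atTop.const_mul_atTop two_pos)) fun n => ?_)
  obtain ⟨hlo, hhi⟩ := card_filter_mod_three_ne_two_bounds n
  have hlo' : 4 * (n : ℝ) ≤ 3 * #{x ∈ Icc (-(n : ℤ)) n | x % 3 ≠ 2} := by exact_mod_cast hlo
  have hhi' : 3 * (#{x ∈ Icc (-(n : ℤ)) n | x % 3 ≠ 2} : ℝ) ≤ 4 * n + 4 := by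
    exact_mod_cast hhi
  rw [abs_le]
  constructor <;> linarith

theorem stmt18 :
    ∃ (A : ℤ × ℤ → ℤ × ℤ → Prop) (S : Set (ℤ × ℤ)),
      IsOrientationZ A ∧ HasDensity S (2 / 3) ∧ IsDom22 A S ∧ IsEff22 A S := by
  refine ⟨towerOrientation, towerColumns, isOrientationZ_towerOrientation,
    hasDensity_towerColumns, fun w => ?_, fun w hw => rec22_towerColumns_of_notMem hw⟩
  by_cases hw : w ∈ towerColumns
  · exact two_le_rec22_of_mem hw
  · exact (rec22_towerColumns_of_notMem hw).ge
end
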